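/- Let k ≥ 1 be an integer and let G = (V,E) be a (k,k)-tight hypergraph. Then G is represented by a 2-uniform (k,k)-tight multigraph: there exist a multiset F of 2-element subsets of V such that H = (V,F) is (k,k)-tight, and a bijection f from the multiset E to the multiset F with f(e) ⊆ e for every e ∈ E. (Equivalently, by the theorem of Frank et al. identifying k-arborescences with (k,k)-tight hypergraphs, every hypergraph k-arborescence is represented by a 2-uniform k-arborescence.) -/

import Mathlib

/-
A `(k,k)`-sparse hypergraph has no edges of size at most one, so it suffices to shrink every
edge of size at least three by one vertex while keeping sparsity. If removing any vertex `v`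
of such an edge `e` broke sparsity, there would be sets `A ⊉ e ⊆ A ∪ {v}` and `B ⊉ e ⊆ B ∪ {w}`
(for distinct `v, w ∈ e`) spanning at least `k|A| - k` and `k|B| - k` edges. As `|e| ≥ 3`, the
sets `A ∩ B` and `A ∪ B` are nonempty and `e` spans `A ∪ B` but neither `A` nor `B`, so
supermodularity of the span count with this strict gain contradicts sparsity of `A ∩ B` and
`A ∪ B`. The number of edges never changes, so tightness is preserved.
-/

/-- The number of edges of the multiset `E` spanned by the vertex set `W`. -/
def spanCount {V : Type*} [DecidableEq V] (E : Multiset (Finset V)) (W : Finset V) : ℕ :=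
  (E.filter fun e => e ⊆ W).card

/-- A hypergraph with edge multiset `E` is `(k,ℓ)`-sparse if every vertex subset spanning
at least one edge spans at most `k|W| - ℓ` edges. -/
def Sparse {V : Type*} [DecidableEq V] (k l : ℕ) (E : Multiset (Finset V)) : Prop :=
  ∀ W : Finset V, 1 ≤ spanCount E W → spanCount E W + l ≤ k * W.card

/-- A hypergraph on the finite vertex type `V` is `(k,ℓ)`-tight if it is `(k,ℓ)`-sparse
and has exactly `k|V| - ℓ` edges. -/
def Tight {V : Type*} [Fintype V] [DecidableEq V] (k l : ℕ) (E : Multiset (Finset V)) : Prop :=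
  Sparse k l E ∧ Multiset.card E + l = k * Fintype.card V

theorem Multiset.Rel.exists_map_fst_map_snd {α β : Type*} {r : α → β → Prop}
    {s : Multiset α} {t : Multiset β} (h : Multiset.Rel r s t) :
    ∃ R : Multiset (α × β), R.map Prod.fst = s ∧ R.map Prod.snd = t ∧ ∀ p ∈ R, r p.1 p.2 := by
  induction h with
  | zero => exact ⟨0, rfl, rfl, by simp⟩
  | @cons a b _ _ hab _ ih =>
    obtain ⟨R, hR₁, hR₂, hR⟩ := ih
    refine ⟨(a, b) ::ₘ R, by simp [hR₁], by simp [hR₂], ?_⟩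
    simpa [hab] using hR

section

variable {V : Type*} [DecidableEq V] {k : ℕ} {E : Multiset (Finset V)} {e W : Finset V}

theorem spanCount_cons (a : Finset V) (E : Multiset (Finset V)) (W : Finset V) :
    spanCount (a ::ₘ E) W = spanCount E W + if a ⊆ W then 1 else 0 := by
  unfold spanCount
  split_ifs with h <;> simp [h]

theorem one_le_spanCount (he : e ∈ E) (heW : e ⊆ W) : 1 ≤ spanCount E W :=
  Multiset.card_pos_iff_exists_mem.2 ⟨e, Multiset.mem_filter.2 ⟨he, heW⟩⟩

theorem spanCount_add_spanCount_le (E : Multiset (Finset V)) (A B : Finset V) :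
    spanCount E A + spanCount E B ≤ spanCount E (A ∩ B) + spanCount E (A ∪ B) := by
  induction E using Multiset.induction_on with
  | empty => simp [spanCount]
  | cons e E ih =>
    simp only [spanCount_cons, Finset.subset_inter_iff]
    have hA : e ⊆ A → e ⊆ A ∪ B := fun h => h.trans Finset.subset_union_left
    have hB : e ⊆ B → e ⊆ A ∪ B := fun h => h.trans Finset.subset_union_right
    split_ifs <;> simp_all <;> omega

theorem Sparse.spanCount_add_le (hs : Sparse k k E) (hW : W.Nonempty) :
    spanCount E W + k ≤ k * W.card := by
  rcases Nat.eq_zero_or_pos (spanCount E W) with h | h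
  · simpa [h] using Nat.le_mul_of_pos_right k hW.card_pos
  · exact hs W h

theorem Sparse.two_le_card (hs : Sparse k k E) (he : e ∈ E) : 2 ≤ e.card := by
  have hspan := one_le_spanCount he (subset_refl e)
  have : k * 1 < k * e.card := by have := hs e hspan; omega
  exact Nat.lt_of_mul_lt_mul_left this

theorem Sparse.exists_witness_of_not_sparse_cons_erase {v : V} (hs : Sparse k k (e ::ₘ E))
    (h : ¬ Sparse k k (e.erase v ::ₘ E)) :
    ∃ W, e.erase v ⊆ W ∧ ¬ e ⊆ W ∧ k * W.card ≤ spanCount E W + k := by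
  simp only [Sparse, not_forall, not_le] at h
  obtain ⟨W, hspan, hW⟩ := h
  have hsW := hs W
  simp only [spanCount_cons] at hspan hW hsW
  by_cases hev : e.erase v ⊆ W
  · by_cases heW : e ⊆ W
    · simp only [hev, heW, if_true] at hW hsW
      omega
    · simp only [hev, if_true] at hW
      exact ⟨W, hev, heW, by omega⟩
  · have heW : ¬ e ⊆ W := fun h => hev ((Finset.erase_subset v e).trans h)
    simp only [hev, heW, if_false] at hspan hW hsW
    omega

theorem Sparse.exists_sparse_cons_erase (hs : Sparse k k (e ::ₘ E)) (he : 3 ≤ e.card) :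
    ∃ v ∈ e, Sparse k k (e.erase v ::ₘ E) := by
  by_contra! hnot
  obtain ⟨v, hv, w, hw, u, hu, hvw, hvu, hwu⟩ := Finset.two_lt_card.1 he
  obtain ⟨A, hvA, heA, hA⟩ := hs.exists_witness_of_not_sparse_cons_erase (hnot v hv)
  obtain ⟨B, hwB, heB, hB⟩ := hs.exists_witness_of_not_sparse_cons_erase (hnot w hw)
  have heAB : e ⊆ A ∪ B := by
    intro x hx
    by_cases hxv : x = v
    · exact Finset.mem_union_right _ (hwB (Finset.mem_erase.2 ⟨hxv ▸ hvw, hx⟩))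
    · exact Finset.mem_union_left _ (hvA (Finset.mem_erase.2 ⟨hxv, hx⟩))
  have huAB : u ∈ A ∩ B :=
    Finset.mem_inter.2 ⟨hvA (Finset.mem_erase.2 ⟨hvu.symm, hu⟩),
      hwB (Finset.mem_erase.2 ⟨hwu.symm, hu⟩)⟩
  have heAB' : ¬ e ⊆ A ∩ B := fun h => heA (h.trans Finset.inter_subset_left)
  have hinter := hs.spanCount_add_le ⟨u, huAB⟩
  have hunion := hs.spanCount_add_le ⟨v, heAB hv⟩
  simp only [spanCount_cons, heAB, heAB', if_true, if_false] at hinter hunion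
  have hsuper := spanCount_add_spanCount_le E A B
  have hcard : k * (A ∪ B).card + k * (A ∩ B).card = k * A.card + k * B.card := by
    rw [← Nat.mul_add, ← Nat.mul_add, Finset.card_union_add_card_inter]
  omega

theorem Sparse.exists_card_two_subset (hs : Sparse k k (e ::ₘ E)) :
    ∃ f ⊆ e, f.card = 2 ∧ Sparse k k (f ::ₘ E) := by
  induction e using Finset.strongInduction with
  | H e ih =>
    rcases (hs.two_le_card (Multiset.mem_cons_self e E)).eq_or_lt with he | he
    · exact ⟨e, subset_refl e, he.symm, hs⟩
    · obtain ⟨v, hv, hsv⟩ := hs.exists_sparse_cons_erase he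
      obtain ⟨f, hfe, hf, hsf⟩ := ih _ (Finset.erase_ssubset hv) hsv
      exact ⟨f, hfe.trans (Finset.erase_subset v e), hf, hsf⟩

theorem Sparse.exists_rel_card_two {C : Multiset (Finset V)} (hs : Sparse k k (C + E)) :
    ∃ F : Multiset (Finset V), (∀ f ∈ F, f.card = 2) ∧ Sparse k k (C + F) ∧
      Multiset.Rel (fun e f => f ⊆ e) E F := by
  induction E using Multiset.induction_on generalizing C with
  | empty => exact ⟨0, by simp, hs, Multiset.Rel.zero⟩
  | cons e E ih =>
    rw [Multiset.add_cons] at hs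
    obtain ⟨f, hfe, hf, hsf⟩ := hs.exists_card_two_subset
    rw [← Multiset.cons_add] at hsf
    obtain ⟨F, hF, hsF, hEF⟩ := ih hsf
    refine ⟨f ::ₘ F, ?_, by rwa [Multiset.add_cons, ← Multiset.cons_add], hEF.cons hfe⟩
    simpa [hf] using hF

end

theorem stmt_19_general {V : Type*} [Fintype V] [DecidableEq V] (k : ℕ)
    (E : Multiset (Finset V)) (ht : Tight k k E) :
    ∃ F : Multiset (Finset V), (∀ e ∈ F, e.card = 2) ∧ Tight k k F ∧
      ∃ R : Multiset (Finset V × Finset V),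
        R.map Prod.fst = E ∧ R.map Prod.snd = F ∧ ∀ p ∈ R, p.2 ⊆ p.1 := by
  obtain ⟨hs, hcard⟩ := ht
  obtain ⟨F, hF, hsF, hEF⟩ := (show Sparse k k (0 + E) by rwa [zero_add]).exists_rel_card_two
  rw [zero_add] at hsF
  exact ⟨F, hF, ⟨hsF, Multiset.card_eq_card_of_rel hEF ▸ hcard⟩, hEF.exists_map_fst_map_snd⟩

/-- Every `(k,k)`-tight hypergraph (a hypergraph `k`-arborescence) is represented by a
`2`-uniform `(k,k)`-tight multigraph: there are a multiset `F` of `2`-element subsets of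
`V` forming a `(k,k)`-tight hypergraph and a bijection from `E` to `F` (encoded as a
multiset `R` of pairs) matching each edge `e` to a `2`-element subset of `e`. -/
theorem stmt_19 {V : Type*} [Fintype V] [DecidableEq V] (k : ℕ) (hk : 1 ≤ k)
    (E : Multiset (Finset V)) (hne : ∀ e ∈ E, e.Nonempty) (ht : Tight k k E) :
    ∃ F : Multiset (Finset V), (∀ e ∈ F, e.card = 2) ∧ Tight k k F ∧
      ∃ R : Multiset (Finset V × Finset V),
        R.map Prod.fst = E ∧ R.map Prod.snd = F ∧ ∀ p ∈ R, p.2 ⊆ p.1 :=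
  stmt_19_general k E ht
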